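/- arXiv:2110.12549 — 3 statements merged into one kernel-verified Lean document; each statement's English description precedes it below -/
import Mathlib

section
/- There exists a constant C > 0 such that for every real t ≥ 2, the Gauss measure of the set {x ∈ (0,1) : a_1(x)·a_2(x) ≥ t} differs from (log t)/(t·log 2) by at most C/t; that is, |μ({x : a_1(x)a_2(x) ≥ t}) − (log t)/(t log 2)| ≤ C/t. -/
/-!
On the cylinder `a₁ = n` one has `a₁ a₂ ≥ t` iff `a₂ ≥ m := ⌈t / n⌉`, i.e. iff `x` lies in an
interval ending at `1 / n`, of Gauss measure `log (1 + 1 / (n ((n + 1) m + 1))) / log 2`. This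
weight lies between `1 / ((n + 1) t) - 1 / t²` and `1 / (n t)`, and is at most `1 / (n (n + 1))`.
Summing over `n ≤ t` gives `(log t) / t + O(1 / t)` by the bounds `H_N = log N + O(1)` on harmonic
numbers, and the tail `n > t` telescopes to `O(1 / t)`.
-/

open MeasureTheory Filter Real Set

/-- The Gauss map `T(x) = 1/x - ⌊1/x⌋`, with `T(0) = 0`. -/
noncomputable def gaussMap (x : ℝ) : ℝ := if x = 0 then 0 else 1 / x - ⌊1 / x⌋

/-- The `n`-th partial quotient `a_n(x) = ⌊1 / T^{n-1}(x)⌋` (for `n ≥ 1`). -/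
noncomputable def pq (n : ℕ) (x : ℝ) : ℕ := ⌊1 / (gaussMap^[n - 1] x)⌋₊

/-- `S_n(x) = ∑_{i=1}^n a_i(x) a_{i+1}(x)`. -/
noncomputable def S (n : ℕ) (x : ℝ) : ℕ := ∑ i ∈ Finset.Icc 1 n, pq i x * pq (i + 1) x

/-- The Gauss measure `μ(A) = (1/log 2) ∫_A dx/(1+x)` on `(0,1)`. -/
noncomputable def gaussMeasure : Measure ℝ :=
  (volume.restrict (Set.Ioo (0:ℝ) 1)).withDensity
    (fun x => ENNReal.ofReal (1 / (Real.log 2 * (1 + x))))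

section SqueezedSeries

open Finset

variable {f : ℕ → ℝ}

theorem sum_range_add_le_of_le_sub_succ (hf : ∀ k : ℕ, f k ≤ 1 / (k + 1) - 1 / (k + 2))
    (N M : ℕ) : ∑ k ∈ range M, f (k + N) ≤ 1 / (N + 1) := by
  let g : ℕ → ℝ := fun k => 1 / (k + N + 1)
  calc ∑ k ∈ range M, f (k + N) ≤ ∑ k ∈ range M, (g k - g (k + 1)) := by
        refine sum_le_sum fun k _ => (hf (k + N)).trans_eq ?_
        push_cast [g]
        ring
    _ = g 0 - g M := sum_range_sub' g M
    _ ≤ 1 / (N + 1) := by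
        have : 0 ≤ g M := by positivity
        simp only [g, CharP.cast_eq_zero, zero_add] at this ⊢
        linarith

theorem summable_of_le_sub_succ (h0 : ∀ k, 0 ≤ f k)
    (hf : ∀ k : ℕ, f k ≤ 1 / (k + 1) - 1 / (k + 2)) : Summable f :=
  summable_of_sum_range_le h0 fun M => by simpa using sum_range_add_le_of_le_sub_succ hf 0 M

theorem cast_harmonic_eq_sum (n : ℕ) : (harmonic n : ℝ) = ∑ k ∈ range n, 1 / ((k : ℝ) + 1) := by
  simp [harmonic]

theorem tsum_le_log_add_two_div {t : ℝ} (ht : 1 ≤ t) (h0 : ∀ k, 0 ≤ f k)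
    (hf : ∀ k : ℕ, f k ≤ 1 / (k + 1) - 1 / (k + 2)) (hupper : ∀ k : ℕ, f k ≤ 1 / ((k + 1) * t)) :
    ∑' k, f k ≤ (log t + 2) / t := by
  set N := ⌊t⌋₊
  have hN0 : (0 : ℝ) < N := by exact_mod_cast Nat.floor_pos.mpr ht
  have hNt : (N : ℝ) ≤ t := Nat.floor_le (by linarith)
  have head : ∑ k ∈ range N, f k ≤ (1 + log t) / t := calc
    _ ≤ ∑ k ∈ range N, 1 / ((k + 1) * t) := sum_le_sum fun k _ => hupper k
    _ = harmonic N / t := by simp only [cast_harmonic_eq_sum, sum_div, div_div]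
    _ ≤ (1 + log N) / t := by gcongr; exact harmonic_le_one_add_log N
    _ ≤ (1 + log t) / t := by gcongr
  have tail : ∑' k, f (k + N) ≤ 1 / t := calc
    _ ≤ 1 / ((N : ℝ) + 1) :=
      tsum_le_of_sum_range_le (fun k => h0 _) (sum_range_add_le_of_le_sub_succ hf N)
    _ ≤ 1 / t := by gcongr; exact (Nat.lt_floor_add_one t).le
  rw [← (summable_of_le_sub_succ h0 hf).sum_add_tsum_nat_add N]
  linarith [show (log t + 2) / t = (1 + log t) / t + 1 / t by ring]

theorem log_sub_two_div_le_tsum {t : ℝ} (ht : 1 ≤ t) (h0 : ∀ k, 0 ≤ f k)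
    (hf : Summable f) (hlower : ∀ k : ℕ, 1 / ((k + 2) * t) - 1 / t ^ 2 ≤ f k) :
    (log t - 2) / t ≤ ∑' k, f k := by
  set N := ⌊t⌋₊
  have hNt : (N : ℝ) ≤ t := Nat.floor_le (by linarith)
  have hlog : log t ≤ harmonic (N + 1) := calc
    log t ≤ log ↑(N + 1 + 1) := by gcongr; push_cast; linarith [Nat.lt_floor_add_one t]
    _ ≤ harmonic (N + 1) := log_add_one_le_harmonic (N + 1)
  calc (log t - 2) / t ≤ (harmonic (N + 1) - 1) / t - N / t ^ 2 := by
        have hN : (N : ℝ) / t ^ 2 ≤ 1 / t := by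
          rw [div_le_div_iff₀ (by positivity) (by positivity)]; nlinarith
        have : (log t - 2) / t ≤ (harmonic (N + 1) - 1) / t - 1 / t := by
          rw [← sub_div]; exact div_le_div_of_nonneg_right (by linarith) (by linarith)
        linarith
    _ = ∑ k ∈ range N, (1 / ((k + 2) * t) - 1 / t ^ 2) := by
        rw [cast_harmonic_eq_sum, sum_range_succ', sum_sub_distrib, sum_const, card_range,
          nsmul_eq_mul]
        push_cast
        simp only [zero_add, div_one, add_sub_cancel_right, sum_div, div_div, mul_one_div]
        congr 3 with k
        ring
    _ ≤ ∑ k ∈ range N, f k := sum_le_sum fun k _ => hlower k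
    _ ≤ ∑' k, f k := hf.sum_le_tsum _ fun k _ => h0 k

theorem abs_tsum_sub_log_div_le {t : ℝ} (ht : 1 ≤ t) (h0 : ∀ k, 0 ≤ f k)
    (hf : ∀ k : ℕ, f k ≤ 1 / (k + 1) - 1 / (k + 2)) (hupper : ∀ k : ℕ, f k ≤ 1 / ((k + 1) * t))
    (hlower : ∀ k : ℕ, 1 / ((k + 2) * t) - 1 / t ^ 2 ≤ f k) :
    |∑' k, f k - log t / t| ≤ 2 / t := by
  have hle := tsum_le_log_add_two_div ht h0 hf hupper
  have hge := log_sub_two_div_le_tsum ht h0 (summable_of_le_sub_succ h0 hf) hlower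
  rw [add_div] at hle
  rw [sub_div] at hge
  rw [abs_le]
  constructor <;> linarith

end SqueezedSeries

instance : NullSingletonClass gaussMeasure := by
  unfold gaussMeasure
  infer_instance

theorem gaussMeasure_Ioo {a b : ℝ} (ha : 0 ≤ a) (hab : a ≤ b) (hb : b ≤ 1) :
    gaussMeasure (Ioo a b) = ENNReal.ofReal (log ((1 + b) / (1 + a)) / log 2) := by
  have hpos : ∀ x ∈ Icc a b, 0 < log 2 * (1 + x) := fun x hx =>
    mul_pos (log_pos one_lt_two) (by linarith [hx.1])
  have hint : IntegrableOn (fun x : ℝ => 1 / (log 2 * (1 + x))) (Ioo a b) :=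
    (continuousOn_const.div (by fun_prop) fun x hx => (hpos x hx).ne').integrableOn_Icc.mono_set
      Ioo_subset_Icc_self
  have hnonneg : ∀ᵐ x ∂volume.restrict (Ioo a b), 0 ≤ 1 / (log 2 * (1 + x)) :=
    (ae_restrict_mem measurableSet_Ioo).mono fun x hx =>
      (one_div_pos.mpr (hpos x (Ioo_subset_Icc_self hx))).le
  have hzero : (0 : ℝ) ∉ uIcc (1 + a) (1 + b) := by
    rw [uIcc_of_le (by linarith)]
    exact fun h => by linarith [h.1]
  rw [gaussMeasure, withDensity_apply _ measurableSet_Ioo,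
    Measure.restrict_restrict measurableSet_Ioo, Ioo_inter_Ioo, sup_eq_left.mpr ha,
    inf_eq_left.mpr hb, ← ofReal_integral_eq_lintegral_ofReal hint hnonneg,
    ← integral_Ioc_eq_integral_Ioo, ← intervalIntegral.integral_of_le hab]
  simp_rw [one_div, mul_inv]
  rw [intervalIntegral.integral_const_mul, intervalIntegral.integral_comp_add_left (fun x => x⁻¹),
    integral_inv hzero, inv_mul_eq_div]

theorem gaussMap_eq_fract (x : ℝ) : gaussMap x = Int.fract (1 / x) := by
  by_cases hx : x = 0
  · simp [gaussMap, hx]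
  · rw [gaussMap, if_neg hx, Int.fract]

theorem one_div_mem_Ioo_of_mem_Ioo {n : ℕ} (hn : 0 < n) {x : ℝ}
    (hx : x ∈ Ioo (1 / ((n : ℝ) + 1)) (1 / n)) : 1 / x ∈ Ioo (n : ℝ) (n + 1) := by
  have hx0 : 0 < x := lt_trans (by positivity) hx.1
  exact ⟨(lt_one_div (by positivity) hx0).mpr hx.2, (one_div_lt hx0 (by positivity)).mpr hx.1⟩

theorem pq_one_eq (x : ℝ) : pq 1 x = ⌊1 / x⌋₊ := rfl

theorem pq_two_eq (x : ℝ) : pq 2 x = ⌊1 / gaussMap x⌋₊ := rfl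

theorem pq_one_of_mem_Ioo {n : ℕ} (hn : 0 < n) {x : ℝ}
    (hx : x ∈ Ioo (1 / ((n : ℝ) + 1)) (1 / n)) : pq 1 x = n := by
  have h := one_div_mem_Ioo_of_mem_Ioo hn hx
  rw [pq_one_eq, Nat.floor_eq_iff (by linarith [h.1])]
  exact ⟨h.1.le, h.2⟩

theorem gaussMap_of_mem_Ioo {n : ℕ} (hn : 0 < n) {x : ℝ}
    (hx : x ∈ Ioo (1 / ((n : ℝ) + 1)) (1 / n)) : gaussMap x = 1 / x - n := by
  have h := one_div_mem_Ioo_of_mem_Ioo hn hx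
  rw [gaussMap_eq_fract, Int.fract_eq_iff]
  exact ⟨by linarith [h.1], by linarith [h.2], n, by push_cast; ring⟩

theorem mem_Ioo_of_pq_two_ne_zero {x : ℝ} (hx : x ∈ Ioo (0 : ℝ) 1) (h2 : pq 2 x ≠ 0) :
    0 < pq 1 x ∧ x ∈ Ioo (1 / ((pq 1 x : ℝ) + 1)) (1 / pq 1 x) := by
  have hinv : 1 < 1 / x := one_lt_one_div hx.1 hx.2
  rw [pq_one_eq]
  have hn : 0 < ⌊1 / x⌋₊ := Nat.floor_pos.mpr hinv.le
  have hle : (⌊1 / x⌋₊ : ℝ) ≤ 1 / x := Nat.floor_le (by linarith)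
  -- if `1 / x` is an integer then `T x = 0`, and `a₂ x = ⌊1 / 0⌋₊ = 0`
  have hne : (⌊1 / x⌋₊ : ℝ) ≠ 1 / x := fun h => h2 <| by
    rw [pq_two_eq, gaussMap_eq_fract, ← h, Int.fract_natCast, div_zero, Nat.floor_zero]
  refine ⟨hn, (one_div_lt (by positivity) hx.1).mpr (Nat.lt_floor_add_one _),
    (lt_one_div hx.1 (by positivity)).mpr (lt_of_le_of_ne hle hne)⟩

/-- `1 / (n + 1 / m)` with `m = ⌈t / n⌉`: on the cylinder `a₁ = n`, `a₂ ≥ m` reads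
`1 / x ≤ n + 1 / m`. -/
noncomputable def tailThreshold (t : ℝ) (n : ℕ) : ℝ := ⌈t / n⌉₊ / (n * ⌈t / n⌉₊ + 1)

theorem le_mul_pq_two_iff {n : ℕ} (hn : 0 < n) {x : ℝ}
    (hx : x ∈ Ioo (1 / ((n : ℝ) + 1)) (1 / n)) (t : ℝ) :
    t ≤ n * pq 2 x ↔ tailThreshold t n ≤ x := by
  have hx0 : 0 < x := lt_trans (by positivity) hx.1
  have hy := gaussMap_of_mem_Ioo hn hx
  have hy0 : 0 < gaussMap x := by linarith [(one_div_mem_Ioo_of_mem_Ioo hn hx).1]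
  set m := ⌈t / n⌉₊
  calc t ≤ n * pq 2 x ↔ m ≤ pq 2 x := by rw [Nat.ceil_le, div_le_iff₀' (by positivity)]
    _ ↔ m * gaussMap x ≤ 1 := by
        rw [pq_two_eq, Nat.le_floor_iff (by positivity), le_div_iff₀ hy0]
    _ ↔ tailThreshold t n ≤ x := by
        rw [hy, tailThreshold, div_le_iff₀ (by positivity), mul_sub, mul_one_div,
          sub_le_iff_le_add, div_le_iff₀ hx0]
        constructor <;> intro h <;> linarith

noncomputable def tailPiece (t : ℝ) (n : ℕ) : Set ℝ :=
  Ioo (1 / ((n : ℝ) + 1)) (1 / n) ∩ Ici (tailThreshold t n)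

theorem setOf_le_pq_one_mul_pq_two_eq_iUnion {t : ℝ} (ht : 0 < t) :
    {x : ℝ | x ∈ Ioo (0 : ℝ) 1 ∧ t ≤ ((pq 1 x * pq 2 x : ℕ) : ℝ)} =
      ⋃ k : ℕ, tailPiece t (k + 1) := by
  ext x
  simp only [mem_ofPred_eq, mem_iUnion, tailPiece, mem_inter_iff, mem_Ici]
  constructor
  · rintro ⟨hx, hle⟩
    have h2 : pq 2 x ≠ 0 := fun h => by
      rw [h, mul_zero, Nat.cast_zero] at hle
      linarith
    obtain ⟨hn, hmem⟩ := mem_Ioo_of_pq_two_ne_zero hx h2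
    refine ⟨pq 1 x - 1, ?_⟩
    rw [Nat.sub_add_cancel hn]
    exact ⟨hmem, (le_mul_pq_two_iff hn hmem t).mp (by exact_mod_cast hle)⟩
  · rintro ⟨k, hmem, hge⟩
    refine ⟨⟨lt_trans (by positivity) hmem.1, hmem.2.trans_le ?_⟩, ?_⟩
    · rw [div_le_one (by positivity)]
      simp
    · rw [Nat.cast_mul, pq_one_of_mem_Ioo k.succ_pos hmem]
      exact (le_mul_pq_two_iff k.succ_pos hmem t).mpr hge

theorem pairwise_disjoint_tailPiece (t : ℝ) :
    Pairwise (Function.onFun Disjoint fun k : ℕ => tailPiece t (k + 1)) := by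
  intro j k hjk
  refine disjoint_left.mpr fun x hj hk => hjk ?_
  have := (pq_one_of_mem_Ioo j.succ_pos hj.1).symm.trans (pq_one_of_mem_Ioo k.succ_pos hk.1)
  omega

/-- `log ((1 + 1 / n) / (1 + tailThreshold t n))`, simplified. -/
noncomputable def tailWeight (t : ℝ) (n : ℕ) : ℝ :=
  log (1 + 1 / (n * ((n + 1) * ⌈t / n⌉₊ + 1)))

theorem one_le_ceil_div {t : ℝ} (ht : 0 < t) {n : ℕ} (hn : 0 < n) : (1 : ℝ) ≤ ⌈t / n⌉₊ := by
  exact_mod_cast Nat.one_le_ceil_iff.mpr (by positivity)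

theorem gaussMeasure_tailPiece {t : ℝ} (ht : 0 < t) {n : ℕ} (hn : 0 < n) :
    gaussMeasure (tailPiece t n) = ENNReal.ofReal (tailWeight t n / log 2) := by
  have hm := one_le_ceil_div ht hn
  have hn' : (1 : ℝ) ≤ n := by exact_mod_cast hn
  have hc1 : 1 / ((n : ℝ) + 1) ≤ tailThreshold t n := by
    rw [tailThreshold, div_le_div_iff₀ (by positivity) (by positivity)]; nlinarith
  have hc2 : tailThreshold t n < 1 / n := by
    rw [tailThreshold, div_lt_div_iff₀ (by positivity) (by positivity)]; nlinarith
  have hIcc : tailPiece t n ⊆ Icc (tailThreshold t n) (1 / n) := fun x hx => ⟨hx.2, hx.1.2.le⟩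
  have hIoo : Ioo (tailThreshold t n) (1 / n) ⊆ tailPiece t n := fun x hx =>
    ⟨⟨hc1.trans_lt hx.1, hx.2⟩, hx.1.le⟩
  rw [le_antisymm ((measure_mono hIcc).trans (measure_congr Ioo_ae_eq_Icc).ge)
    (measure_mono hIoo), gaussMeasure_Ioo ((by positivity : (0 : ℝ) ≤ 1 / (n + 1)).trans hc1) hc2.le
    (by rw [div_le_one (by positivity)]; exact hn'), tailWeight, tailThreshold]
  congr 3
  field_simp
  ring

theorem tailWeight_nonneg (t : ℝ) (n : ℕ) : 0 ≤ tailWeight t n :=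
  log_nonneg (le_add_of_nonneg_right (by positivity))

theorem tailWeight_le {t : ℝ} (ht : 0 < t) {n : ℕ} (hn : 0 < n) :
    tailWeight t n ≤ min (1 / (n * t)) (1 / n - 1 / (n + 1)) := by
  have hm := one_le_ceil_div ht hn
  have hnm : t ≤ n * ⌈t / n⌉₊ := by
    have := Nat.le_ceil (t / n)
    rwa [div_le_iff₀' (by positivity)] at this
  refine (log_le_sub_one_of_pos (by positivity)).trans ?_
  rw [add_sub_cancel_left, le_min_iff]
  constructor
  · gcongr; nlinarith
  · rw [div_sub_div _ _ (by positivity) (by positivity)]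
    gcongr <;> nlinarith

theorem sub_le_tailWeight {t : ℝ} (ht : 0 < t) {n : ℕ} (hn : 0 < n) :
    1 / ((n + 1) * t) - 1 / t ^ 2 ≤ tailWeight t n := by
  have hn' : (0 : ℝ) < n := by exact_mod_cast hn
  set m : ℝ := (⌈t / n⌉₊ : ℝ)
  have hnm : n * m < t + n := by
    have := mul_lt_mul_of_pos_left (Nat.ceil_lt_add_one (show 0 ≤ t / n by positivity)) hn'
    rwa [mul_add, mul_div_cancel₀ _ hn'.ne', mul_one] at this
  calc 1 / ((n + 1) * t) - 1 / t ^ 2 ≤ 1 / ((n + 1) * (t + n + 1)) := by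
        have hsplit :
            1 / ((n + 1) * t) - 1 / ((n + 1) * (t + n + 1)) = 1 / (t * (t + n + 1)) := by
          field_simp
          ring
        have : 1 / (t * (t + n + 1)) ≤ 1 / t ^ 2 := by
          gcongr
          nlinarith
        linarith
    _ ≤ 1 - (1 + 1 / (n * ((n + 1) * m + 1)))⁻¹ := by
        rw [one_add_div (by positivity), inv_div, one_sub_div (by positivity),
          add_sub_cancel_left]
        apply one_div_le_one_div_of_le (by positivity)
        nlinarith [mul_le_mul_of_nonneg_left hnm.le (by positivity : (0 : ℝ) ≤ n + 1)]
    _ ≤ tailWeight t n := one_sub_inv_le_log_of_pos (by positivity)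

theorem cast_succ_add_one (k : ℕ) : ((k + 1 : ℕ) : ℝ) + 1 = k + 2 := by
  push_cast
  ring

theorem tailWeight_succ_le_sub {t : ℝ} (ht : 0 < t) (k : ℕ) :
    tailWeight t (k + 1) ≤ 1 / (k + 1) - 1 / (k + 2) := by
  have := (tailWeight_le ht k.succ_pos).trans (min_le_right _ _)
  rwa [cast_succ_add_one, Nat.cast_succ] at this

theorem abs_tsum_tailWeight_sub_log_div_le {t : ℝ} (ht : 1 ≤ t) :
    |∑' k : ℕ, tailWeight t (k + 1) - log t / t| ≤ 2 / t := by
  have ht0 : 0 < t := by linarith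
  refine abs_tsum_sub_log_div_le ht (fun k => tailWeight_nonneg _ _) (tailWeight_succ_le_sub ht0)
    (fun k => ?_) (fun k => ?_)
  · have := (tailWeight_le ht0 k.succ_pos).trans (min_le_left _ _)
    rwa [Nat.cast_succ] at this
  · have := sub_le_tailWeight ht0 k.succ_pos
    rwa [cast_succ_add_one] at this

theorem gaussMeasure_setOf_le_pq_one_mul_pq_two {t : ℝ} (ht : 0 < t) :
    gaussMeasure {x : ℝ | x ∈ Ioo (0 : ℝ) 1 ∧ t ≤ ((pq 1 x * pq 2 x : ℕ) : ℝ)} =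
      ENNReal.ofReal ((∑' k : ℕ, tailWeight t (k + 1)) / log 2) := by
  have hsum : Summable fun k : ℕ => tailWeight t (k + 1) :=
    summable_of_le_sub_succ (fun k => tailWeight_nonneg _ _) (tailWeight_succ_le_sub ht)
  rw [setOf_le_pq_one_mul_pq_two_eq_iUnion ht, measure_iUnion (pairwise_disjoint_tailPiece t)
    fun _ => measurableSet_Ioo.inter measurableSet_Ici,
    tsum_congr fun k => gaussMeasure_tailPiece ht k.succ_pos, ← ENNReal.ofReal_tsum_of_nonneg
      (fun k => div_nonneg (tailWeight_nonneg _ _) (log_nonneg one_le_two)) (hsum.div_const _),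
    tsum_div_const]

theorem gauss_measure_tail_asymptotics :
    ∃ C : ℝ, 0 < C ∧ ∀ t : ℝ, 2 ≤ t →
      |(gaussMeasure {x : ℝ | x ∈ Set.Ioo (0:ℝ) 1 ∧
          t ≤ ((pq 1 x * pq 2 x : ℕ) : ℝ)}).toReal - Real.log t / (t * Real.log 2)| ≤ C / t := by
  have hlog2 : 0 < log 2 := log_pos one_lt_two
  refine ⟨2 / log 2, by positivity, fun t ht => ?_⟩
  rw [gaussMeasure_setOf_le_pq_one_mul_pq_two (by linarith), ENNReal.toReal_ofReal
    (div_nonneg (tsum_nonneg fun k => tailWeight_nonneg _ _) hlog2.le), ← div_div,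
    ← sub_div, abs_div, abs_of_pos hlog2, div_right_comm]
  exact div_le_div_of_nonneg_right (abs_tsum_tailWeight_sub_log_div_le (by linarith)) hlog2.le
end

section
/- There exists a constant C > 0 such that for every real t ≥ 1, the Gauss measure of the set {x ∈ (0,1) : a_1(x)·a_2(x) > t and a_2(x)·a_3(x) > t} is at most C/t. -/
open MeasureTheory Filter Real Set

/-!
Up to the factor `1 / log 2`, the Gauss measure is dominated by Lebesgue measure. If `a₁(x) = j` and
`a₂(x) = k`, then `x = [0; j, k + z]` with `z = T² x`, and `t < k a₃(x)` forces `z ≤ 1 / a₃(x) < k / t`.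
So the set lies in the union, over `j k > t`, of intervals of length at most `min(1, k/t) / (j k)²`.
Summing over `j > t / k` leaves `2 min(1, k/t)² / k² ≤ 2 min(1/t², 1/k²)`, and summing that over `k`
gives `8 / t`.
-/

lemma gaussMap_mem_Ico (x : ℝ) : gaussMap x ∈ Ico 0 1 := by
  unfold gaussMap
  split_ifs
  · simp
  · exact ⟨Int.fract_nonneg _, Int.fract_lt_one _⟩

lemma one_div_eq_pq_one_add_gaussMap {x : ℝ} (hx : 0 ≤ x) : 1 / x = pq 1 x + gaussMap x := by
  rcases hx.eq_or_lt with rfl | hx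
  · simp [pq, gaussMap]
  · rw [pq, gaussMap, if_neg hx.ne', Function.iterate_zero, id,
      natCast_floor_eq_intCast_floor (by positivity)]
    ring

lemma pq_succ {n : ℕ} (hn : n ≠ 0) (x : ℝ) : pq (n + 1) x = pq n (gaussMap x) := by
  obtain ⟨m, rfl⟩ := Nat.exists_eq_succ_of_ne_zero hn
  simp [pq, Function.iterate_succ_apply]

lemma pos_of_pq_one_ne_zero {y : ℝ} (hy : 0 ≤ y) (h : pq 1 y ≠ 0) : 0 < y := by
  refine hy.lt_of_ne fun hy0 => h ?_
  simp [pq, ← hy0]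

lemma mul_pq_one_le_one {z : ℝ} (hz : 0 ≤ z) : z * pq 1 z ≤ 1 := by
  calc z * pq 1 z ≤ z * (1 / z) := by gcongr; exact Nat.floor_le (by positivity)
    _ ≤ 1 := by rw [mul_one_div]; exact div_self_le_one z

/-- The inverse branch `z ↦ [0; j, k + z]` of `T²` on the cylinder `{a₁ = j, a₂ = k}`. -/
noncomputable def invBranch (j k z : ℝ) : ℝ := 1 / (j + 1 / (k + z))

lemma invBranch_pq_gaussMap {x : ℝ} (hx : 0 ≤ x) :
    invBranch (pq 1 x) (pq 2 x) (gaussMap^[2] x) = x := by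
  have hy := one_div_eq_pq_one_add_gaussMap (gaussMap_mem_Ico x).1
  rw [invBranch, pq_succ one_ne_zero, Function.iterate_succ_apply', Function.iterate_one, ← hy,
    one_div_one_div, ← one_div_eq_pq_one_add_gaussMap hx, one_div_one_div]

lemma invBranch_sub_invBranch {j k a b : ℝ} (hj : 0 ≤ j) (hk : 0 < k) (ha : 0 ≤ a) (hb : 0 ≤ b) :
    invBranch j k b - invBranch j k a = (b - a) / ((j * (k + b) + 1) * (j * (k + a) + 1)) := by
  have : 0 < k + a := by linarith
  have : 0 < k + b := by linarith
  unfold invBranch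
  field_simp
  ring

lemma strictMonoOn_invBranch {j k : ℝ} (hj : 0 ≤ j) (hk : 0 < k) :
    StrictMonoOn (invBranch j k) (Ici 0) := by
  intro a (ha : 0 ≤ a) b (hb : 0 ≤ b) hab
  have hden : 0 < (j * (k + b) + 1) * (j * (k + a) + 1) := by
    apply mul_pos <;> nlinarith
  rw [← sub_pos, invBranch_sub_invBranch hj hk ha hb]
  exact div_pos (sub_pos.2 hab) hden

lemma invBranch_sub_invBranch_zero_le {j k b : ℝ} (hj : 0 < j) (hk : 0 < k) (hb : 0 ≤ b) :
    invBranch j k b - invBranch j k 0 ≤ b / (j * k) ^ 2 := by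
  rw [invBranch_sub_invBranch hj.le hk le_rfl hb, sub_zero]
  gcongr
  nlinarith [mul_pos hj hk, mul_nonneg hj.le hb]

lemma gaussMeasure_le_smul_volume : gaussMeasure ≤ ENNReal.ofReal (1 / log 2) • volume := by
  have hlog : 0 < log 2 := log_pos one_lt_two
  calc gaussMeasure
      ≤ (volume.restrict (Ioo (0:ℝ) 1)).withDensity (fun _ => ENNReal.ofReal (1 / log 2)) := by
        refine withDensity_mono (ae_restrict_of_forall_mem measurableSet_Ioo fun x hx => ?_)
        refine ENNReal.ofReal_le_ofReal ?_
        gcongr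
        exact le_mul_of_one_le_right hlog.le (by linarith [hx.1])
    _ = ENNReal.ofReal (1 / log 2) • volume.restrict (Ioo (0:ℝ) 1) := withDensity_const _
    _ ≤ ENNReal.ofReal (1 / log 2) • volume := by gcongr; exact Measure.restrict_le_self

/-- The part of the cylinder `{a₁ = j, a₂ = k}` where `T² x ≤ min 1 (k / t)`, used only when
`t < j k`. -/
noncomputable def cylinderCover (t : ℝ) (p : ℕ × ℕ) : Set ℝ :=
  if t < p.1 * p.2 then Ioc (invBranch p.1 p.2 0) (invBranch p.1 p.2 (min 1 (p.2 / t))) else ∅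

lemma subset_iUnion_cylinderCover {t : ℝ} (ht : 0 < t) :
    {x : ℝ | x ∈ Ioo 0 1 ∧ t < ((pq 1 x * pq 2 x : ℕ) : ℝ) ∧ t < ((pq 2 x * pq 3 x : ℕ) : ℝ)} ⊆
      ⋃ p, cylinderCover t p := by
  rintro x ⟨hx, h12, h23⟩
  push_cast at h12 h23
  refine mem_iUnion.2 ⟨(pq 1 x, pq 2 x), ?_⟩
  rw [cylinderCover, if_pos h12]
  set z := gaussMap^[2] x
  have hz0 : 0 ≤ z := (gaussMap_mem_Ico _).1
  have hpq3 : pq 3 x = pq 1 z := by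
    rw [pq_succ two_ne_zero, pq_succ one_ne_zero]; rfl
  rw [hpq3] at h23
  have hk : (0 : ℝ) < pq 2 x := pos_of_mul_pos_right (ht.trans h12) (Nat.cast_nonneg _)
  have hz : 0 < z := pos_of_pq_one_ne_zero hz0 (by rintro h; simp [h] at h23; linarith)
  have hzk : z < pq 2 x / t := by
    rw [lt_div_iff₀ ht]
    nlinarith [mul_pq_one_le_one hz0]
  have hzw : z ≤ min 1 (pq 2 x / t) := le_min (gaussMap_mem_Ico _).2.le hzk.le
  have hmono := strictMonoOn_invBranch (Nat.cast_nonneg (pq 1 x)) hk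
  have hxz : invBranch (pq 1 x) (pq 2 x) z = x := invBranch_pq_gaussMap hx.1.le
  exact ⟨(hmono self_mem_Ici hz0 hz).trans_eq hxz,
    hxz.symm.trans_le (hmono.monotoneOn hz0 (hz0.trans hzw) hzw)⟩

lemma volume_cylinderCover_le {t : ℝ} (ht : 0 < t) (j k : ℕ) :
    volume (cylinderCover t (j, k)) ≤
      if t < j * k then ENNReal.ofReal (min 1 (k / t) / (j * k) ^ 2) else 0 := by
  rw [cylinderCover]
  split_ifs with h
  · have hjk : (0 : ℝ) < j * k := ht.trans h
    have hj : (0 : ℝ) < j := pos_of_mul_pos_left hjk (Nat.cast_nonneg _)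
    have hk : (0 : ℝ) < k := pos_of_mul_pos_right hjk (Nat.cast_nonneg _)
    rw [Real.volume_Ioc]
    exact ENNReal.ofReal_le_ofReal
      (invBranch_sub_invBranch_zero_le hj hk (le_min zero_le_one (by positivity)))
  · simp

lemma tsum_inv_sq_of_lt_le {s : ℝ} (hs : 0 < s) :
    ∑' j : ℕ, (if s < j then ENNReal.ofReal ((j : ℝ) ^ 2)⁻¹ else 0) ≤
      2 * ENNReal.ofReal (min 1 s⁻¹) := by
  have hfloor : 1 / ((⌊s⌋₊ : ℝ) + 1) ≤ min 1 s⁻¹ := by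
    rw [one_div]
    exact le_min (inv_le_one_of_one_le₀ (by simp))
      (inv_anti₀ hs (Nat.lt_floor_add_one s).le)
  refine ENNReal.tsum_le_of_sum_range_le fun n => ?_
  rw [← Finset.sum_filter, ← ENNReal.ofReal_sum_of_nonneg (fun _ _ => by positivity),
    ← ENNReal.ofReal_ofNat 2, ← ENNReal.ofReal_mul zero_le_two]
  refine ENNReal.ofReal_le_ofReal ?_
  have hsub : (Finset.range n).filter (fun j : ℕ => s < j) ⊆ Finset.Ioo ⌊s⌋₊ n := by
    intro j hj
    rw [Finset.mem_filter, Finset.mem_range] at hj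
    exact Finset.mem_Ioo.2 ⟨(Nat.floor_lt hs.le).2 hj.2, hj.1⟩
  calc ∑ j ∈ (Finset.range n).filter (fun j : ℕ => s < j), ((j : ℝ) ^ 2)⁻¹
      ≤ ∑ j ∈ Finset.Ioo ⌊s⌋₊ n, ((j : ℝ) ^ 2)⁻¹ :=
        Finset.sum_le_sum_of_subset_of_nonneg hsub fun _ _ _ => by positivity
    _ ≤ 2 / ((⌊s⌋₊ : ℝ) + 1) := sum_Ioo_inv_sq_le _ _
    _ ≤ 2 * min 1 s⁻¹ := by rw [div_eq_mul_one_div]; gcongr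

lemma tsum_ite_lt_mul_div_sq_le {t c : ℝ} (ht : 0 < t) (hc : 0 ≤ c) (k : ℕ) :
    ∑' j : ℕ, (if t < j * k then ENNReal.ofReal (c / (j * k) ^ 2) else 0) ≤
      2 * ENNReal.ofReal (c * min 1 (k / t) / k ^ 2) := by
  rcases (Nat.cast_nonneg (α := ℝ) k).eq_or_lt with hk | hk
  · simp [← hk, ht.not_gt]
  have hterm : ∀ j : ℕ, (if t < j * k then ENNReal.ofReal (c / (j * k) ^ 2) else 0) =
      ENNReal.ofReal (c / k ^ 2) * if t / k < j then ENNReal.ofReal ((j : ℝ) ^ 2)⁻¹ else 0 := by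
    intro j
    simp only [div_lt_iff₀ hk, mul_ite, mul_zero]
    rw [← ENNReal.ofReal_mul (by positivity)]
    congr 2
    field_simp
  calc ∑' j : ℕ, (if t < j * k then ENNReal.ofReal (c / (j * k) ^ 2) else 0)
      = ENNReal.ofReal (c / k ^ 2) *
          ∑' j : ℕ, (if t / k < j then ENNReal.ofReal ((j : ℝ) ^ 2)⁻¹ else 0) := by
        simp_rw [hterm]; exact ENNReal.tsum_mul_left
    _ ≤ ENNReal.ofReal (c / k ^ 2) * (2 * ENNReal.ofReal (min 1 (t / k)⁻¹)) := by
        gcongr; exact tsum_inv_sq_of_lt_le (by positivity)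
    _ = 2 * ENNReal.ofReal (c * min 1 (k / t) / k ^ 2) := by
        rw [inv_div, mul_left_comm, ← ENNReal.ofReal_mul (by positivity)]
        congr 2
        ring

lemma tsum_ite_natCast_le_eq_floor_add_one_mul (t : ℝ) (ht : 0 ≤ t) (c : ENNReal) :
    ∑' k : ℕ, (if (k : ℝ) ≤ t then c else 0) = (⌊t⌋₊ + 1) * c := by
  simp_rw [← Nat.le_floor_iff ht, ← Finset.mem_range_succ_iff]
  rw [tsum_eq_sum (s := Finset.range (⌊t⌋₊ + 1)) fun k hk => if_neg hk, Finset.sum_ite_mem,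
    Finset.inter_self, Finset.sum_const, Finset.card_range, nsmul_eq_mul]
  push_cast; rfl

lemma sq_min_one_div_div_sq_le {k t : ℝ} (ht : 0 < t) (hk : 0 ≤ k) :
    min 1 (k / t) ^ 2 / k ^ 2 ≤ min (t ^ 2)⁻¹ (k ^ 2)⁻¹ := by
  rcases hk.eq_or_lt with rfl | hk
  · simp [sq_nonneg]
  have hw0 : 0 ≤ min 1 (k / t) := le_min zero_le_one (by positivity)
  refine le_min ?_ ?_
  · calc min 1 (k / t) ^ 2 / k ^ 2 ≤ (k / t) ^ 2 / k ^ 2 := by gcongr; exact min_le_right _ _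
      _ = (t ^ 2)⁻¹ := by field_simp
  · rw [div_eq_mul_inv]
    exact mul_le_of_le_one_left (by positivity) (pow_le_one₀ hw0 (min_le_left _ _))

lemma tsum_sq_min_one_div_div_sq_le {t : ℝ} (ht : 1 ≤ t) :
    ∑' k : ℕ, ENNReal.ofReal (min 1 (k / t) ^ 2 / k ^ 2) ≤ ENNReal.ofReal (4 / t) := by
  have ht0 : 0 < t := zero_lt_one.trans_le ht
  have hterm : ∀ k : ℕ, ENNReal.ofReal (min 1 (k / t) ^ 2 / k ^ 2) ≤
      (if (k : ℝ) ≤ t then ENNReal.ofReal (t ^ 2)⁻¹ else 0) +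
        if t < k then ENNReal.ofReal ((k : ℝ) ^ 2)⁻¹ else 0 := by
    intro k
    have hk := sq_min_one_div_div_sq_le ht0 k.cast_nonneg
    by_cases hkt : (k : ℝ) ≤ t
    · rw [if_pos hkt, if_neg hkt.not_gt, add_zero]
      exact ENNReal.ofReal_le_ofReal (hk.trans (min_le_left _ _))
    · rw [if_neg hkt, if_pos (not_le.1 hkt), zero_add]
      exact ENNReal.ofReal_le_ofReal (hk.trans (min_le_right _ _))
  have hsmall : ∑' k : ℕ, (if (k : ℝ) ≤ t then ENNReal.ofReal (t ^ 2)⁻¹ else 0) ≤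
      ENNReal.ofReal (2 / t) := by
    have hcast : ((⌊t⌋₊ : ENNReal) + 1) = ENNReal.ofReal (⌊t⌋₊ + 1) := by
      rw [ENNReal.ofReal_add (Nat.cast_nonneg _) zero_le_one, ENNReal.ofReal_natCast,
        ENNReal.ofReal_one]
    rw [tsum_ite_natCast_le_eq_floor_add_one_mul t ht0.le, hcast,
      ← ENNReal.ofReal_mul (by positivity)]
    refine ENNReal.ofReal_le_ofReal ?_
    rw [← div_eq_mul_inv, div_le_div_iff₀ (by positivity) ht0]
    nlinarith [Nat.floor_le ht0.le]
  have hlarge : ∑' k : ℕ, (if t < k then ENNReal.ofReal ((k : ℝ) ^ 2)⁻¹ else 0) ≤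
      ENNReal.ofReal (2 / t) := by
    refine (tsum_inv_sq_of_lt_le ht0).trans ?_
    rw [← ENNReal.ofReal_ofNat 2, ← ENNReal.ofReal_mul zero_le_two, div_eq_mul_inv]
    gcongr
    exact min_le_right _ _
  calc ∑' k : ℕ, ENNReal.ofReal (min 1 (k / t) ^ 2 / k ^ 2)
      ≤ ∑' k : ℕ, (if (k : ℝ) ≤ t then ENNReal.ofReal (t ^ 2)⁻¹ else 0) +
          ∑' k : ℕ, (if t < k then ENNReal.ofReal ((k : ℝ) ^ 2)⁻¹ else 0) :=
        (ENNReal.tsum_le_tsum hterm).trans_eq ENNReal.tsum_add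
    _ ≤ ENNReal.ofReal (2 / t) + ENNReal.ofReal (2 / t) := add_le_add hsmall hlarge
    _ = ENNReal.ofReal (4 / t) := by
        rw [← ENNReal.ofReal_add (by positivity) (by positivity)]
        ring_nf

lemma tsum_volume_cylinderCover_le {t : ℝ} (ht : 1 ≤ t) :
    ∑' p, volume (cylinderCover t p) ≤ ENNReal.ofReal (8 / t) := by
  have ht0 : 0 < t := zero_lt_one.trans_le ht
  calc ∑' p, volume (cylinderCover t p)
      ≤ ∑' p : ℕ × ℕ, (if t < p.1 * p.2 then
          ENNReal.ofReal (min 1 (p.2 / t) / (p.1 * p.2) ^ 2) else 0) :=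
        ENNReal.tsum_le_tsum fun p => volume_cylinderCover_le ht0 p.1 p.2
    _ = ∑' (k : ℕ) (j : ℕ), (if t < j * k then
          ENNReal.ofReal (min 1 (k / t) / (j * k) ^ 2) else 0) := by
        rw [ENNReal.tsum_prod', ENNReal.tsum_comm]
    _ ≤ ∑' k : ℕ, 2 * ENNReal.ofReal (min 1 (k / t) ^ 2 / k ^ 2) :=
        ENNReal.tsum_le_tsum fun k =>
          (tsum_ite_lt_mul_div_sq_le ht0 (le_min zero_le_one (by positivity)) k).trans_eq (by rw [← sq])
    _ ≤ 2 * ENNReal.ofReal (4 / t) := by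
        rw [ENNReal.tsum_mul_left]; gcongr; exact tsum_sq_min_one_div_div_sq_le ht
    _ = ENNReal.ofReal (8 / t) := by
        rw [← ENNReal.ofReal_ofNat 2, ← ENNReal.ofReal_mul zero_le_two]; ring_nf

theorem gauss_measure_two_consecutive_large :
    ∃ C : ℝ, 0 < C ∧ ∀ t : ℝ, 1 ≤ t →
      gaussMeasure {x : ℝ | x ∈ Set.Ioo (0:ℝ) 1 ∧
          t < ((pq 1 x * pq 2 x : ℕ) : ℝ) ∧ t < ((pq 2 x * pq 3 x : ℕ) : ℝ)} ≤
        ENNReal.ofReal (C / t) := by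
  refine ⟨8 / log 2, div_pos (by norm_num) (log_pos one_lt_two), fun t ht => ?_⟩
  calc gaussMeasure _
      ≤ ENNReal.ofReal (1 / log 2) * volume _ := gaussMeasure_le_smul_volume _
    _ ≤ ENNReal.ofReal (1 / log 2) * volume (⋃ p, cylinderCover t p) := by
        gcongr; exact subset_iUnion_cylinderCover (zero_lt_one.trans_le ht)
    _ ≤ ENNReal.ofReal (1 / log 2) * ENNReal.ofReal (8 / t) := by
        gcongr; exact (measure_iUnion_le _).trans (tsum_volume_cylinderCover_le ht)
    _ = ENNReal.ofReal (8 / log 2 / t) := by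
        rw [← ENNReal.ofReal_mul (one_div_nonneg.2 (log_pos one_lt_two).le)]; ring_nf
end

section
/- There exists a constant C > 0 such that for every real T ≥ 2, ∫_0^1 (a_1(x)·a_2(x))^2 · 1_{{a_1(x)a_2(x) ≤ T}} dμ(x) ≤ C · T · log T, where μ is the Gauss measure. (Second moment bound for the truncated product of consecutive partial quotients.) -/
open MeasureTheory Filter Real Set

/-!
On the cylinder `1/(k+1) < x ≤ 1/k` we have `a₁ = k` and the Gauss map sends `x` to `(1 - k x)/x`;
since `⌊1/y⌋ y ≤ 1`, this gives `a₁ a₂ (1 - k x) ≤ k x ≤ 1`. On the event `a₁ a₂ ≤ T` we also have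
`k ≤ T` (unless `a₂ = 0`), so `(a₁ a₂)² ≤ min (T, 1/(1 - k x))² ≤ 4T²/(1 + T (1 - k x))²`, whose
Lebesgue integral over the cylinder is at most `4T/k`. Summing over `k ≤ T` gives
`4T H_⌊T⌋ ≤ 4T (1 + log T)`, and the Gauss density is at most `1/log 2`.
-/

theorem measurable_gaussMap : Measurable gaussMap :=
  Measurable.ite (measurableSet_singleton 0) measurable_const
    ((measurable_const.div measurable_id).sub
      (measurable_from_top.comp (measurable_const.div measurable_id).floor))

theorem measurable_pq (n : ℕ) : Measurable fun x => pq n x :=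
  (measurable_const.div (measurable_gaussMap.iterate _)).nat_floor

theorem natFloor_one_div_mul_le_one (y : ℝ) : (⌊1 / y⌋₊ : ℝ) * y ≤ 1 := by
  rcases le_or_gt y 0 with hy | hy
  · rw [Nat.floor_eq_zero.mpr (by linarith [one_div_nonpos.mpr hy])]
    simp
  · exact (le_div_iff₀ hy).mp (Nat.floor_le (by positivity))

theorem pq_succ_mul_iterate_le_one (n : ℕ) (x : ℝ) : (pq (n + 1) x : ℝ) * gaussMap^[n] x ≤ 1 :=
  natFloor_one_div_mul_le_one _

section Cylinder

variable {k : ℕ} {x : ℝ}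

theorem natFloor_one_div_eq_of_mem_Ioc (hx : x ∈ Ioc (1 / (k + 1 : ℝ)) (1 / k)) :
    0 < x ∧ ⌊1 / x⌋₊ = k := by
  have hx0 : 0 < x := lt_trans (by positivity) hx.1
  have hk : (0 : ℝ) < k := one_div_pos.mp (hx0.trans_le hx.2)
  refine ⟨hx0, (Nat.floor_eq_iff (by positivity)).mpr ⟨?_, ?_⟩⟩
  · exact (le_one_div hk hx0).mpr hx.2
  · exact (one_div_lt hx0 (by positivity)).mpr hx.1

theorem pq_one_eq_of_mem_Ioc (hx : x ∈ Ioc (1 / (k + 1 : ℝ)) (1 / k)) : pq 1 x = k :=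
  (natFloor_one_div_eq_of_mem_Ioc hx).2

theorem gaussMap_eq_of_mem_Ioc (hx : x ∈ Ioc (1 / (k + 1 : ℝ)) (1 / k)) :
    gaussMap x = 1 / x - k := by
  obtain ⟨hx0, hfloor⟩ := natFloor_one_div_eq_of_mem_Ioc hx
  rw [gaussMap, if_neg hx0.ne', ← Int.natCast_floor_eq_floor (by positivity), hfloor]
  rfl

theorem mul_le_one_of_mem_Ioc (hx : x ∈ Ioc (1 / (k + 1 : ℝ)) (1 / k)) : k * x ≤ 1 :=
  (le_div_iff₀' (one_div_pos.mp ((natFloor_one_div_eq_of_mem_Ioc hx).1.trans_le hx.2))).mp hx.2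

theorem pq_one_mul_pq_two_mul_le_one (hx : x ∈ Ioc (1 / (k + 1 : ℝ)) (1 / k)) :
    ((pq 1 x * pq 2 x : ℕ) : ℝ) * (1 - k * x) ≤ 1 := by
  obtain ⟨hx0, -⟩ := natFloor_one_div_eq_of_mem_Ioc hx
  have hgauss : 1 - k * x = x * gaussMap x := by
    rw [gaussMap_eq_of_mem_Ioc hx]; field_simp
  have hgauss_nonneg : 0 ≤ gaussMap x :=
    (mul_nonneg_iff_of_pos_left hx0).mp (hgauss ▸ sub_nonneg.mpr (mul_le_one_of_mem_Ioc hx))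
  have hpq2 : (pq 2 x : ℝ) * gaussMap x ≤ 1 := pq_succ_mul_iterate_le_one 1 x
  calc ((pq 1 x * pq 2 x : ℕ) : ℝ) * (1 - k * x) = (k * x) * ((pq 2 x : ℝ) * gaussMap x) := by
        rw [hgauss, Nat.cast_mul, pq_one_eq_of_mem_Ioc hx]; ring
    _ ≤ 1 := mul_le_one₀ (mul_le_one_of_mem_Ioc hx) (by positivity) hpq2

end Cylinder

noncomputable def truncProdSq (T x : ℝ) : ℝ :=
  if ((pq 1 x * pq 2 x : ℕ) : ℝ) ≤ T then ((pq 1 x * pq 2 x : ℕ) : ℝ) ^ 2 else 0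

theorem truncProdSq_nonneg (T x : ℝ) : 0 ≤ truncProdSq T x := by
  unfold truncProdSq; split_ifs <;> positivity

theorem measurable_truncProdSq (T : ℝ) : Measurable (truncProdSq T) := by
  have hprod : Measurable fun x => ((pq 1 x * pq 2 x : ℕ) : ℝ) :=
    measurable_from_top.comp ((measurable_pq 1).mul (measurable_pq 2))
  exact Measurable.ite (measurableSet_le hprod measurable_const) (hprod.pow_const 2)
    measurable_const

theorem truncProdSq_le_of_mem_Ioc {T x : ℝ} {k : ℕ} (hx : x ∈ Ioc (1 / (k + 1 : ℝ)) (1 / k)) :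
    truncProdSq T x ≤ if (k : ℝ) ≤ T then 4 * T ^ 2 / (1 + T * (1 - k * x)) ^ 2 else 0 := by
  have hbound_nonneg : 0 ≤ if (k : ℝ) ≤ T then 4 * T ^ 2 / (1 + T * (1 - k * x)) ^ 2 else 0 := by
    split_ifs <;> positivity
  have hs : 0 ≤ 1 - k * x := sub_nonneg.mpr (mul_le_one_of_mem_Ioc hx)
  have hps := pq_one_mul_pq_two_mul_le_one hx
  unfold truncProdSq
  rw [pq_one_eq_of_mem_Ioc hx] at hps ⊢
  set p : ℝ := ((k * pq 2 x : ℕ) : ℝ) with hp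
  by_cases hpT : p ≤ T
  swap
  · rw [if_neg hpT]; exact hbound_nonneg
  rw [if_pos hpT]
  rcases Nat.eq_zero_or_pos (pq 2 x) with hzero | hpos
  · simpa [hp, hzero] using hbound_nonneg
  have hkp : (k : ℝ) ≤ p := by rw [hp]; exact_mod_cast Nat.le_mul_of_pos_right k hpos
  have hT : 0 ≤ T := (Nat.cast_nonneg _).trans hpT
  rw [if_pos (hkp.trans hpT), le_div_iff₀ (by positivity)]
  have h2T : p * (1 + T * (1 - k * x)) ≤ 2 * T := by nlinarith
  calc p ^ 2 * (1 + T * (1 - k * x)) ^ 2 = (p * (1 + T * (1 - k * x))) ^ 2 := by ring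
    _ ≤ (2 * T) ^ 2 := pow_le_pow_left₀ (by positivity) h2T 2
    _ = 4 * T ^ 2 := by ring

theorem setLIntegral_Ioc_inv_one_add_mul_sub_sq_le {a b c : ℝ} (hc : 0 < c) :
    ∫⁻ x in Ioc a b, ENNReal.ofReal ((1 + c * (b - x)) ^ 2)⁻¹ ≤ ENNReal.ofReal c⁻¹ := by
  rcases le_or_gt b a with hba | hab
  · simp [Ioc_eq_empty_of_le hba]
  have hpos : ∀ x ∈ Icc a b, 0 < 1 + c * (b - x) := fun x hx => by nlinarith [hx.2]
  have hderiv : ∀ x ∈ uIcc a b,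
      HasDerivAt (fun y => c⁻¹ * (1 + c * (b - y))⁻¹) ((1 + c * (b - x)) ^ 2)⁻¹ x := by
    intro x hx
    rw [uIcc_of_le hab.le] at hx
    have h := ((((hasDerivAt_id x).const_sub b).const_mul c).const_add 1).inv
      (hpos x hx).ne' |>.const_mul c⁻¹
    refine h.congr_deriv ?_
    simp only [id]
    field_simp
  have hcont : ContinuousOn (fun x => ((1 + c * (b - x)) ^ 2)⁻¹) (Icc a b) :=
    ContinuousOn.inv₀ (by fun_prop) fun x hx => (pow_pos (hpos x hx) 2).ne'
  rw [← ofReal_integral_eq_lintegral_ofReal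
      ((hcont.integrableOn_Icc).mono_set Ioc_subset_Icc_self)
      (ae_of_all _ fun x => by positivity),
    ← intervalIntegral.integral_of_le hab.le,
    intervalIntegral.integral_eq_sub_of_hasDerivAt hderiv
      ((hcont.mono (uIcc_of_le hab.le).subset).intervalIntegrable)]
  apply ENNReal.ofReal_le_ofReal
  have := hpos a ⟨le_rfl, hab.le⟩
  simp only [sub_self, mul_zero, add_zero, inv_one, mul_one]
  nlinarith [mul_pos (inv_pos.mpr hc) (inv_pos.mpr this)]

theorem setLIntegral_truncProdSq_Ioc_le (T : ℝ) (k : ℕ) :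
    ∫⁻ x in Ioc (1 / (k + 1 : ℝ)) (1 / k), ENNReal.ofReal (truncProdSq T x)
      ≤ if (k : ℝ) ≤ T then ENNReal.ofReal (4 * T / k) else 0 := by
  calc ∫⁻ x in Ioc (1 / (k + 1 : ℝ)) (1 / k), ENNReal.ofReal (truncProdSq T x)
      ≤ ∫⁻ x in Ioc (1 / (k + 1 : ℝ)) (1 / k),
          ENNReal.ofReal (if (k : ℝ) ≤ T then 4 * T ^ 2 / (1 + T * (1 - k * x)) ^ 2 else 0) :=
        setLIntegral_mono' measurableSet_Ioc fun x hx =>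
          ENNReal.ofReal_le_ofReal (truncProdSq_le_of_mem_Ioc hx)
    _ ≤ _ := by
      split_ifs with hkT
      swap
      · simp
      rcases Nat.eq_zero_or_pos k with rfl | hk
      · simp
      have hk : (0 : ℝ) < k := by exact_mod_cast hk
      have hT : 0 < T := hk.trans_le hkT
      have hrewrite : ∀ x : ℝ, ENNReal.ofReal (4 * T ^ 2 / (1 + T * (1 - k * x)) ^ 2) =
          ENNReal.ofReal (4 * T ^ 2) *
            ENNReal.ofReal ((1 + (T * k) * (1 / k - x)) ^ 2)⁻¹ := by
        intro x
        rw [← ENNReal.ofReal_mul (by positivity)]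
        congr 1
        field_simp
      simp_rw [hrewrite]
      rw [lintegral_const_mul' _ _ ENNReal.ofReal_ne_top]
      calc ENNReal.ofReal (4 * T ^ 2) * ∫⁻ x in Ioc (1 / (k + 1 : ℝ)) (1 / k),
            ENNReal.ofReal ((1 + (T * k) * (1 / k - x)) ^ 2)⁻¹
          ≤ ENNReal.ofReal (4 * T ^ 2) * ENNReal.ofReal (T * k)⁻¹ :=
            mul_le_mul_right (setLIntegral_Ioc_inv_one_add_mul_sub_sq_le (by positivity)) _
        _ = ENNReal.ofReal (4 * T / k) := by
            rw [← ENNReal.ofReal_mul (by positivity)]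
            congr 1
            field_simp

theorem gaussMeasure_le_smul_volume_s9 :
    gaussMeasure ≤ ENNReal.ofReal (Real.log 2)⁻¹ • volume.restrict (Ioo (0 : ℝ) 1) := by
  rw [gaussMeasure, ← withDensity_const]
  refine withDensity_mono ((ae_restrict_iff' measurableSet_Ioo).mpr (ae_of_all _ fun x hx => ?_))
  have hlog2 : 0 < Real.log 2 := Real.log_pos one_lt_two
  refine ENNReal.ofReal_le_ofReal ?_
  rw [one_div, mul_inv]
  exact mul_le_of_le_one_right (by positivity) (inv_le_one_of_one_le₀ (by linarith [hx.1]))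

theorem Ioo_zero_one_subset_iUnion_Ioc :
    Ioo (0 : ℝ) 1 ⊆ ⋃ k : ℕ, Ioc (1 / (k + 1 : ℝ)) (1 / k) := by
  intro x hx
  have hk : (0 : ℝ) < ⌊1 / x⌋₊ := by
    have : (1 : ℝ) ≤ 1 / x := by rw [le_div_iff₀ hx.1]; linarith [hx.2]
    exact_mod_cast Nat.floor_pos.mpr this
  refine mem_iUnion.mpr ⟨⌊1 / x⌋₊, ?_, ?_⟩
  · exact (one_div_lt (by positivity) hx.1).mpr (Nat.lt_floor_add_one _)
  · exact (le_one_div hk hx.1).mp (Nat.floor_le (one_div_pos.mpr hx.1).le)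

theorem tsum_ite_le_mul_one_add_log {c T : ℝ} (hc : 0 ≤ c) (hT : 1 ≤ T) :
    ∑' k : ℕ, (if (k : ℝ) ≤ T then ENNReal.ofReal (c / k) else 0)
      ≤ ENNReal.ofReal (c * (1 + Real.log T)) := by
  have hsupport : ∀ k ∉ Finset.Icc 1 ⌊T⌋₊,
      (if (k : ℝ) ≤ T then ENNReal.ofReal (c / k) else 0) = 0 := by
    intro k hk
    rw [Finset.mem_Icc, not_and_or, not_le, Nat.lt_one_iff, not_le] at hk
    rcases hk with rfl | hk
    · simp
    · rw [if_neg (fun h => hk.not_ge (Nat.le_floor h))]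
  have hfloor : (0 : ℝ) < ⌊T⌋₊ := by exact_mod_cast Nat.floor_pos.mpr hT
  rw [tsum_eq_sum hsupport]
  calc ∑ k ∈ Finset.Icc 1 ⌊T⌋₊, (if (k : ℝ) ≤ T then ENNReal.ofReal (c / k) else 0)
      ≤ ∑ k ∈ Finset.Icc 1 ⌊T⌋₊, ENNReal.ofReal (c * (k : ℝ)⁻¹) :=
        Finset.sum_le_sum fun k _ => by split_ifs <;> simp [div_eq_mul_inv]
    _ = ENNReal.ofReal (c * (harmonic ⌊T⌋₊ : ℝ)) := by
        rw [← ENNReal.ofReal_sum_of_nonneg (fun k _ => by positivity), ← Finset.mul_sum,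
          harmonic_eq_sum_Icc]
        push_cast
        rfl
    _ ≤ ENNReal.ofReal (c * (1 + Real.log T)) := by
        refine ENNReal.ofReal_le_ofReal (mul_le_mul_of_nonneg_left ?_ hc)
        calc (harmonic ⌊T⌋₊ : ℝ) ≤ 1 + Real.log ⌊T⌋₊ := harmonic_le_one_add_log _
          _ ≤ 1 + Real.log T := by
            gcongr
            exact Nat.floor_le (by linarith)

theorem lintegral_truncProdSq_gaussMeasure_le {T : ℝ} (hT : 1 ≤ T) :
    ∫⁻ x, ENNReal.ofReal (truncProdSq T x) ∂gaussMeasure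
      ≤ ENNReal.ofReal ((Real.log 2)⁻¹ * (4 * T * (1 + Real.log T))) := by
  rw [ENNReal.ofReal_mul (inv_nonneg.mpr (Real.log_nonneg one_le_two))]
  calc ∫⁻ x, ENNReal.ofReal (truncProdSq T x) ∂gaussMeasure
      ≤ ENNReal.ofReal (Real.log 2)⁻¹ * ∫⁻ x in Ioo 0 1, ENNReal.ofReal (truncProdSq T x) := by
        refine (lintegral_mono' gaussMeasure_le_smul_volume_s9 le_rfl).trans_eq ?_
        rw [lintegral_smul_measure, smul_eq_mul]
    _ ≤ ENNReal.ofReal (Real.log 2)⁻¹ * ∑' k : ℕ,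
          ∫⁻ x in Ioc (1 / (k + 1 : ℝ)) (1 / k), ENNReal.ofReal (truncProdSq T x) := by
        gcongr
        exact (lintegral_mono_set Ioo_zero_one_subset_iUnion_Ioc).trans (lintegral_iUnion_le _ _)
    _ ≤ ENNReal.ofReal (Real.log 2)⁻¹ * ENNReal.ofReal (4 * T * (1 + Real.log T)) := by
        gcongr
        exact (ENNReal.tsum_le_tsum (setLIntegral_truncProdSq_Ioc_le T)).trans
          (tsum_ite_le_mul_one_add_log (by positivity) hT)

theorem second_moment_truncated :
    ∃ C : ℝ, 0 < C ∧ ∀ T : ℝ, 2 ≤ T →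
      (∫ x, (if ((pq 1 x * pq 2 x : ℕ) : ℝ) ≤ T then ((pq 1 x * pq 2 x : ℕ) : ℝ) ^ 2 else 0)
          ∂gaussMeasure) ≤ C * T * Real.log T := by
  have hlog2 : 0 < Real.log 2 := Real.log_pos one_lt_two
  refine ⟨4 * (1 + (Real.log 2)⁻¹) / Real.log 2, by positivity, fun T hT => ?_⟩
  have hlogT : Real.log 2 ≤ Real.log T := Real.log_le_log two_pos hT
  have hone_add_log : 1 + Real.log T ≤ (1 + (Real.log 2)⁻¹) * Real.log T := by
    have : 1 ≤ (Real.log 2)⁻¹ * Real.log T := by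
      rw [inv_mul_eq_div, one_le_div hlog2]; exact hlogT
    linarith
  change ∫ x, truncProdSq T x ∂gaussMeasure ≤ _
  rw [integral_eq_lintegral_of_nonneg_ae (ae_of_all _ (truncProdSq_nonneg T))
    (measurable_truncProdSq T).aestronglyMeasurable]
  refine ENNReal.toReal_le_of_le_ofReal
    (mul_nonneg (by positivity) (hlog2.le.trans hlogT))
    ((lintegral_truncProdSq_gaussMeasure_le (by linarith)).trans (ENNReal.ofReal_le_ofReal ?_))
  calc (Real.log 2)⁻¹ * (4 * T * (1 + Real.log T))
      ≤ (Real.log 2)⁻¹ * (4 * T * ((1 + (Real.log 2)⁻¹) * Real.log T)) := by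
        gcongr
    _ = 4 * (1 + (Real.log 2)⁻¹) / Real.log 2 * T * Real.log T := by ring
end
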